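/- (Elementary symmetric identity combining Lemmas 7.9 and 7.10.) In R = MvPolynomial (Fin k) (ZMod 2), writing e_j(M) for the j-th elementary symmetric polynomial of a multiset M (i.e. Multiset.esymm M j) and + for multiset sum, the following identity holds: e_{2^{k−2}}(B + Γ + Δ) + e_{2^{k−2}}(B + H + E) + e_{2^{k−2}}(E + Γ + Λ) + e_{2^{k−2}}(Λ + H + Δ) = ∏_{b∈B} (b + y + z)². (Each of the four multisets B+Γ+Δ, B+H+E, E+Γ+Λ, Λ+H+Δ has cardinality 3·2^{k−3}.) -/

import Mathlib

/-!
Let `V` be the multiset of sums of the even subsets of `X₀, …, X_{k-3}`, so that `B = X₀ + V`,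
and let `P(T) = ∏_{v ∈ V} (T + v)`. In characteristic 2, `P` is additive,
`P(T + u) = P(T) + P(u)`: adjoining a generator `g` to a nonempty set of generators containing `h`
turns `P` into `P(T) · P(T + g + h) = P · (P + P(g + h))`, which is again additive.

With `α = P(X₀)`, `β = P(y)`, `γ = P(z)`, the multisets `B, Γ, Δ, E, H, Λ` therefore have
`∏ (T + m)` equal to `P + α, P + β, P + γ, P + α + β, P + α + γ, P + β + γ`. By Vieta,
`e_{2n}(M₁ + M₂ + M₃)` with `n = 2^{k-3}` is the coefficient of `T^n` in the product of the three,
and in characteristic 2 the four triple products add up to `(α + β + γ)² P + (α + β + γ)³`,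
whose coefficient of `T^n` is `(α + β + γ)² = P(X₀ + y + z)² = ∏_{b ∈ B} (b + y + z)²`.
-/

open Finset

namespace Polynomial

variable {R : Type*} [CommRing R]

def IsAdditive (P : R[X]) : Prop :=
  ∀ u : R, P.comp (X + C u) = P + C (P.eval u)

theorem isAdditive_X : (X : R[X]).IsAdditive := fun u => by simp

theorem IsAdditive.eval_add {P : R[X]} (hP : P.IsAdditive) (u v : R) :
    P.eval (u + v) = P.eval u + P.eval v := by
  simpa [add_comm u] using congrArg (eval u) (hP v)

theorem IsAdditive.mul_add_C [CharP R 2] {P : R[X]} (hP : P.IsAdditive) (d : R) :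
    (P * (P + C d)).IsAdditive := fun u => by
  rw [mul_comp, add_comp, C_comp, hP u, eval_mul, Polynomial.eval_add, eval_C, C_mul, C_add]
  grind

end Polynomial

section ProdXAddC

open Polynomial

variable {R : Type*} [CommRing R]

noncomputable def prodXAddC (M : Multiset R) : R[X] :=
  (M.map fun w => X + C w).prod

theorem prodXAddC_add (M N : Multiset R) :
    prodXAddC (M + N) = prodXAddC M * prodXAddC N := by
  rw [prodXAddC, Multiset.map_add, Multiset.prod_add, prodXAddC, prodXAddC]

theorem prodXAddC_map_add (M : Multiset R) (c : R) :
    prodXAddC (M.map (c + ·)) = (prodXAddC M).comp (X + C c) := by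
  rw [prodXAddC, prodXAddC, ← coe_compRingHom_apply, map_multiset_prod, Multiset.map_map,
    Multiset.map_map]
  congr 1
  refine Multiset.map_congr rfl fun w _ => ?_
  simp only [Function.comp_apply, coe_compRingHom_apply, add_comp, X_comp, C_comp, C_add]
  ring

theorem eval_prodXAddC (M : Multiset R) (u : R) :
    (prodXAddC M).eval u = (M.map (u + ·)).prod := by
  rw [prodXAddC, eval_multiset_prod, Multiset.map_map]
  simp

theorem esymm_eq_coeff_prodXAddC (M : Multiset R) {j : ℕ} (hj : j ≤ Multiset.card M) :
    M.esymm j = (prodXAddC M).coeff (Multiset.card M - j) := by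
  rw [prodXAddC, Multiset.prod_X_add_C_coeff M (Nat.sub_le _ _), Nat.sub_sub_self hj]

theorem coeff_card_prodXAddC (M : Multiset R) :
    (prodXAddC M).coeff (Multiset.card M) = 1 := by
  rw [← Nat.sub_zero (Multiset.card M), ← esymm_eq_coeff_prodXAddC M (Nat.zero_le _)]
  simp [Multiset.esymm]

theorem esymm_add_add_eq_coeff_prodXAddC (M₁ M₂ M₃ : Multiset R) {n : ℕ}
    (h₁ : Multiset.card M₁ = n) (h₂ : Multiset.card M₂ = n) (h₃ : Multiset.card M₃ = n) :
    (M₁ + M₂ + M₃).esymm (2 * n) = (prodXAddC M₁ * prodXAddC M₂ * prodXAddC M₃).coeff n := by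
  have hcard : Multiset.card (M₁ + M₂ + M₃) = n + 2 * n := by
    simp only [Multiset.card_add, h₁, h₂, h₃]; ring
  rw [esymm_eq_coeff_prodXAddC _ (by omega), hcard, Nat.add_sub_cancel, prodXAddC_add,
    prodXAddC_add]

end ProdXAddC

section ParitySubsetSums

variable {ι M : Type*} [AddCommMonoid M]

def paritySubsetSums (f : ι → M) (s : Finset ι) (e : ZMod 2) : Multiset M :=
  {T ∈ s.powerset | (#T : ZMod 2) = e}.val.map fun T => ∑ i ∈ T, f i

theorem paritySubsetSums_eq_sum (f : ι → M) (s : Finset ι) (e : ZMod 2) :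
    paritySubsetSums f s e
      = ∑ T ∈ s.powerset, if (#T : ZMod 2) = e then {∑ i ∈ T, f i} else 0 := by
  rw [← sum_filter, sum_eq_multiset_sum, ← Multiset.sum_map_singleton (paritySubsetSums f s e),
    paritySubsetSums, Multiset.map_map]
  rfl

variable [DecidableEq ι]

theorem paritySubsetSums_insert (f : ι → M) {a : ι} {s : Finset ι} (ha : a ∉ s) (e : ZMod 2) :
    paritySubsetSums f (insert a s) e
      = paritySubsetSums f s e + (paritySubsetSums f s (e + 1)).map (f a + ·) := by
  rw [paritySubsetSums_eq_sum, sum_powerset_insert ha, paritySubsetSums_eq_sum,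
    paritySubsetSums_eq_sum, ← Multiset.coe_mapAddMonoidHom, map_sum]
  congr 1
  refine sum_congr rfl fun T hT => ?_
  have haT : a ∉ T := fun h => ha (mem_powerset.1 hT h)
  simp only [card_insert_of_notMem haT, sum_insert haT, Nat.cast_succ, CharTwo.add_eq_iff_eq_add]
  split_ifs <;> simp

theorem card_paritySubsetSums (f : ι → M) {a : ι} {s : Finset ι} (ha : a ∈ s) (e : ZMod 2) :
    Multiset.card (paritySubsetSums f s e) = 2 ^ (#s - 1) := by
  have hparity : ∀ c : ZMod 2, (if c = e then 1 else 0) + (if c = e + 1 then 1 else 0) = 1 := by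
    revert e; decide
  rw [← insert_erase ha, paritySubsetSums_insert f (notMem_erase a s), Multiset.card_add,
    Multiset.card_map, paritySubsetSums_eq_sum, paritySubsetSums_eq_sum, Multiset.card_sum,
    Multiset.card_sum, ← sum_add_distrib]
  simp only [apply_ite Multiset.card, Multiset.card_singleton, Multiset.card_zero, hparity,
    sum_const, card_powerset, card_insert_of_notMem (notMem_erase a s), smul_eq_mul, mul_one,
    Nat.add_sub_cancel]

theorem paritySubsetSums_add_one {R : Type*} [CommRing R] [CharP R 2] (f : ι → R) {a : ι}
    {s : Finset ι} (ha : a ∈ s) (e : ZMod 2) :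
    paritySubsetSums f s (e + 1) = (paritySubsetSums f s e).map (f a + ·) := by
  induction s using Finset.induction_on generalizing e with
  | empty => exact absurd ha (notMem_empty a)
  | insert c s hc ih =>
    rw [paritySubsetSums_insert f hc, paritySubsetSums_insert f hc, Multiset.map_add,
      Multiset.map_map, add_assoc, CharTwo.add_self_eq_zero, add_zero]
    rcases mem_insert.1 ha with rfl | has
    · rw [add_comm]
      congr 1
      simp [← add_assoc, CharTwo.add_self_eq_zero]
    · rw [ih has, Multiset.map_map]
      congr 2
      funext w
      grind

theorem isAdditive_prodXAddC_paritySubsetSums_zero {R : Type*} [CommRing R] [CharP R 2]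
    (f : ι → R) {s : Finset ι} (hs : s.Nonempty) :
    (prodXAddC (paritySubsetSums f s 0)).IsAdditive := by
  induction hs using Finset.Nonempty.cons_induction with
  | singleton a =>
    have hsingleton : paritySubsetSums f {a} 0 = {0} := by
      rw [← insert_empty, paritySubsetSums_insert f (notMem_empty a)]
      simp [paritySubsetSums_eq_sum]
    simpa [hsingleton, prodXAddC] using Polynomial.isAdditive_X
  | cons a s ha hs ih =>
    obtain ⟨b, hb⟩ := hs
    have hshift : ((f a + ·) ∘ (f b + ·)) = (f a + f b + ·) := by
      funext w; exact (add_assoc _ _ _).symm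
    rw [cons_eq_insert, paritySubsetSums_insert f ha, paritySubsetSums_add_one f hb,
      Multiset.map_map, hshift, prodXAddC_add, prodXAddC_map_add, ih]
    exact ih.mul_add_C _

end ParitySubsetSums

section FourTriples

open Polynomial

variable {R : Type*} [CommRing R]

theorem sum_four_triple_products {S : Type*} [CommRing S] [CharP S 2] (A a b c : S) :
    (A + a) * (A + b) * (A + c) + (A + a) * (A + (c + a)) * (A + (b + a))
      + (A + (b + a)) * (A + b) * (A + (b + c)) + (A + (b + c)) * (A + (c + a)) * (A + c)
      = (a + b + c) ^ 2 * A + (a + b + c) ^ 3 := by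
  grind

theorem esymm_four_triples_eq_sq [CharP R 2] (V : Multiset R) (hV : (prodXAddC V).IsAdditive)
    (hV₀ : V ≠ 0) (x y z : R) (B : Multiset R) (hB : B = V.map (x + ·)) :
    (B + B.map (fun b => y + x + b) + B.map (fun b => z + x + b)).esymm (2 * Multiset.card V)
      + (B + B.map (fun b => z + b) + B.map (fun b => y + b)).esymm (2 * Multiset.card V)
      + (B.map (fun b => y + b) + B.map (fun b => y + x + b)
          + B.map (fun b => y + z + x + b)).esymm (2 * Multiset.card V)
      + (B.map (fun b => y + z + x + b) + B.map (fun b => z + b)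
          + B.map (fun b => z + x + b)).esymm (2 * Multiset.card V)
      = (B.map fun b => b + y + z).prod ^ 2 := by
  set P := prodXAddC V
  have hB' : prodXAddC B = P + C (P.eval x) := by rw [hB, prodXAddC_map_add, hV]
  have hshift (c : R) : prodXAddC (B.map (c + ·)) = P + C (P.eval c + P.eval x) := by
    rw [prodXAddC_map_add, hB', add_comp, hV, C_comp, add_assoc, ← C_add]
  have hshift_add (c : R) : prodXAddC (B.map (c + x + ·)) = P + C (P.eval c) := by
    rw [hshift, hV.eval_add, add_assoc, CharTwo.add_self_eq_zero, add_zero]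
  have hcardB : Multiset.card B = Multiset.card V := by rw [hB, Multiset.card_map]
  have hcard (c : R) : Multiset.card (B.map (c + ·)) = Multiset.card V := by
    rw [Multiset.card_map, hcardB]
  have hprod : (B.map fun b => b + y + z).prod = (prodXAddC B).eval (y + z) := by
    rw [eval_prodXAddC]
    exact congrArg _ (Multiset.map_congr rfl fun b _ => by ring)
  rw [esymm_add_add_eq_coeff_prodXAddC _ _ _ hcardB (hcard _) (hcard _),
    esymm_add_add_eq_coeff_prodXAddC _ _ _ hcardB (hcard _) (hcard _),
    esymm_add_add_eq_coeff_prodXAddC _ _ _ (hcard _) (hcard _) (hcard _),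
    esymm_add_add_eq_coeff_prodXAddC _ _ _ (hcard _) (hcard _) (hcard _),
    hshift_add y, hshift_add z, hshift_add (y + z), hshift y, hshift z, hB', ← coeff_add,
    ← coeff_add, ← coeff_add, hprod, hB', eval_add, eval_C, hV.eval_add]
  simp only [C_add]
  rw [sum_four_triple_products, ← C_add, ← C_add, ← map_pow, ← map_pow, coeff_add, coeff_C_mul,
    coeff_card_prodXAddC, coeff_C, if_neg (Multiset.card_pos.2 hV₀).ne', add_zero, mul_one]
  ring

end FourTriples

open MvPolynomial

theorem four_fixed_points_esymm_identity (k : ℕ) (hk : 3 ≤ k)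
    (y z : MvPolynomial (Fin k) (ZMod 2))
    (B Γm Δm Em Hm Λm : Multiset (MvPolynomial (Fin k) (ZMod 2)))
    (hB : B = (Finset.univ.filter
        (fun S : Finset (Fin k) => Odd S.card ∧ ∀ i ∈ S, (i : ℕ) < k - 2)).val.map
        (fun S => ∑ i ∈ S, X i))
    (hΓ : Γm = B.map (fun b => y + X ⟨0, by omega⟩ + b))
    (hΔ : Δm = B.map (fun b => z + X ⟨0, by omega⟩ + b))
    (hE : Em = B.map (fun b => y + b))
    (hH : Hm = B.map (fun b => z + b))
    (hΛ : Λm = B.map (fun b => y + z + X ⟨0, by omega⟩ + b))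
    :
    Multiset.esymm (B + Γm + Δm) (2 ^ (k - 2)) + Multiset.esymm (B + Hm + Em) (2 ^ (k - 2))
      + Multiset.esymm (Em + Γm + Λm) (2 ^ (k - 2))
      + Multiset.esymm (Λm + Hm + Δm) (2 ^ (k - 2))
      = ((B.map (fun b => b + y + z)).prod) ^ 2 := by
  subst hΓ hΔ hE hH hΛ
  set s : Finset (Fin k) := {i | (i : ℕ) < k - 2}
  have h₀ : (⟨0, by omega⟩ : Fin k) ∈ s := by simp [s]; omega
  have hs : #s = k - 2 := by simp [s, Fin.card_filter_val_lt]
  have hB_odd : B = paritySubsetSums (X (R := ZMod 2)) s 1 := by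
    rw [hB, paritySubsetSums]
    congr 2
    ext S
    simp [s, subset_iff, ZMod.natCast_eq_one_iff_odd, and_comm]
  have hE_card : Multiset.card (paritySubsetSums (X (R := ZMod 2)) s 0) = 2 ^ (k - 3) := by
    rw [card_paritySubsetSums X h₀, hs, Nat.sub_sub]
  have hpow : 2 ^ (k - 2) = 2 * Multiset.card (paritySubsetSums (X (R := ZMod 2)) s 0) := by
    rw [hE_card, ← pow_succ']; congr 1; omega
  rw [hpow]
  refine esymm_four_triples_eq_sq _ (isAdditive_prodXAddC_paritySubsetSums_zero X ⟨_, h₀⟩) ?_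
    _ y z B ?_
  · rw [← Multiset.card_pos, hE_card]; positivity
  · rw [hB_odd, ← zero_add 1, paritySubsetSums_add_one X h₀]
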